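/- Let b ≥ 1 and τ ∈ {τ^b_0, τ^b_1}, and let φ be an instance of cubic monotone one-in-three 3-SAT with m clauses. If (sup, sig) is a τ-region of the translator T such that sig(k_0) = … = sig(k_{6m−1}) = (0,b), or such that sig(k_0) = … = sig(k_{6m−1}) = (b,0), then φ has a one-in-three model. -/

import Mathlib

/-! ## Transition systems -/

/-- A transition system over ambient state type `S` and event type `E`:
a set of states, a set of events, and a (deterministic or not) labeled
transition relation whose transitions stay inside the state/event sets. -/
structure TS (S E : Type) where
  states : Set S
  events : Set E
  tr : S → E → S → Prop
  tr_mem : ∀ ⦃s e s'⦄, tr s e s' → s ∈ states ∧ e ∈ events ∧ s' ∈ states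

/-- Event `e` occurs at state `s`. -/
def TS.occurs {S E : Type} (A : TS S E) (e : E) (s : S) : Prop := ∃ s', A.tr s e s'

/-! ## The types of nets `τ^b_t`, `t ∈ {0,1,2,3}` -/

/-- Events of the types of nets: pairs `(m,n)` or group events `c ∈ ℤ_{b+1}`. -/
inductive Tev where
  | pr (m n : ℕ)
  | gr (c : ℕ)
deriving DecidableEq

def Tev.minus : Tev → ℕ | .pr m _ => m | .gr _ => 0
def Tev.plus : Tev → ℕ | .pr _ n => n | .gr _ => 0
def Tev.absv : Tev → ℕ | .pr _ _ => 0 | .gr c => c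

/-- Membership in the event set of the type `τ^b_t`:
for `t ∈ {1,3}` (pure types) the pair events `(m,n)` with `m,n ≥ 1` are discarded;
for `t ∈ {2,3}` the pair `(0,0)` is discarded and the group events `0,…,b` are present;
for `t ∈ {0,1}` there are no group events. -/
def tevOk (b t : ℕ) : Tev → Prop
  | .pr m n => m ≤ b ∧ n ≤ b ∧ ((t = 1 ∨ t = 3) → (m = 0 ∨ n = 0)) ∧
      ((t = 2 ∨ t = 3) → ¬(m = 0 ∧ n = 0))
  | .gr c => c ≤ b ∧ (t = 2 ∨ t = 3)

/-- The partial transition function of the types `τ^b_t` on the states `{0,…,b}`. -/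
def tevStep (b s : ℕ) : Tev → Option ℕ
  | .pr m n => if m ≤ s ∧ s - m + n ≤ b then some (s - m + n) else none
  | .gr c => some ((s + c) % (b + 1))

/-! ## Regions, ESSP and SSP -/

/-- A `τ^b_t`-region of a transition system `A`. -/
structure Region (b t : ℕ) {S E : Type} (A : TS S E) where
  sup : S → ℕ
  sig : E → Tev
  sup_le : ∀ s ∈ A.states, sup s ≤ b
  sig_ok : ∀ e ∈ A.events, tevOk b t (sig e)
  resp : ∀ ⦃s e s'⦄, A.tr s e s' → tevStep b (sup s) (sig e) = some (sup s')

/-- A region solves the ESSP atom `(e,s)` if `sig e` does not occur at `sup s` in `τ`. -/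
def Region.solvesESSP {b t : ℕ} {S E : Type} {A : TS S E} (R : Region b t A)
    (e : E) (s : S) : Prop :=
  tevStep b (R.sup s) (R.sig e) = none

/-- A region solves the SSP atom `(s,s')` if `sup s ≠ sup s'`. -/
def Region.solvesSSP {b t : ℕ} {S E : Type} {A : TS S E} (R : Region b t A)
    (s s' : S) : Prop :=
  R.sup s ≠ R.sup s'

/-- `A` has the `τ^b_t`-ESSP: every ESSP atom is solvable. -/
def TS.hasESSP (b t : ℕ) {S E : Type} (A : TS S E) : Prop :=
  ∀ e ∈ A.events, ∀ s ∈ A.states, ¬ A.occurs e s → ∃ R : Region b t A, R.solvesESSP e s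

/-- `A` has the `τ^b_t`-SSP: every SSP atom is solvable. -/
def TS.hasSSP (b t : ℕ) {S E : Type} (A : TS S E) : Prop :=
  ∀ s ∈ A.states, ∀ s' ∈ A.states, s ≠ s' → ∃ R : Region b t A, R.solvesSSP s s'

/-- `A` is `τ^b_t`-feasible. -/
def TS.feasible (b t : ℕ) {S E : Type} (A : TS S E) : Prop :=
  A.hasESSP b t ∧ A.hasSSP b t

/-! ## Combinators: linear TSs, relabeled states, unions -/

/-- The linear TS given by the word `w`: states `0,…,w.length`, and an
`e`-labeled transition from `s` to `s+1` whenever `w[s] = e`. -/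
def TS.chain {E : Type} (w : List E) : TS ℕ E where
  states := {s | s ≤ w.length}
  events := {e | e ∈ w}
  tr s e s' := w[s]? = some e ∧ s' = s + 1
  tr_mem := by
    rintro s e s' ⟨h, rfl⟩
    have hs : s < w.length := by
      by_contra hc
      rw [List.getElem?_eq_none (Nat.le_of_not_lt hc)] at h
      cases h
    obtain ⟨hlt, rfl⟩ := List.getElem?_eq_some_iff.mp h
    exact ⟨Nat.le_of_lt hs, List.getElem_mem hlt, hs⟩

/-- Renaming the states of a TS along `f`. -/
def TS.mapStates {S S' E : Type} (f : S → S') (A : TS S E) : TS S' E where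
  states := f '' A.states
  events := A.events
  tr s e s' := ∃ a a', A.tr a e a' ∧ s = f a ∧ s' = f a'
  tr_mem := by
    rintro s e s' ⟨a, a', h, rfl, rfl⟩
    obtain ⟨h1, h2, h3⟩ := A.tr_mem h
    exact ⟨⟨a, h1, rfl⟩, h2, ⟨a', h3, rfl⟩⟩

/-- The union `U(A_i)_{i : ι}` of a family of TSs over the same ambient types. -/
def TS.unionFam {ι S E : Type} (F : ι → TS S E) : TS S E where
  states := ⋃ i, (F i).states
  events := ⋃ i, (F i).events
  tr s e s' := ∃ i, (F i).tr s e s'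
  tr_mem := by
    rintro s e s' ⟨i, h⟩
    obtain ⟨h1, h2, h3⟩ := (F i).tr_mem h
    exact ⟨Set.mem_iUnion.2 ⟨i, h1⟩, Set.mem_iUnion.2 ⟨i, h2⟩, Set.mem_iUnion.2 ⟨i, h3⟩⟩

/-- The SSP for a union: all SSP atoms given by distinct states of the *same*
constituent are solvable by regions of the union. -/
def unionSSP (b t : ℕ) {ι S E : Type} (F : ι → TS S E) : Prop :=
  ∀ i : ι, ∀ s ∈ (F i).states, ∀ s' ∈ (F i).states, s ≠ s' →
    ∃ R : Region b t (TS.unionFam F), R.solvesSSP s s'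
/-! ## Cubic monotone one-in-three 3-SAT -/

/-- An instance `φ = {C_0,…,C_{m-1}}` of cubic monotone one-in-three 3-SAT with
variables `V(φ) = {X_0,…,X_{m-1}}` (identified with `Fin m`): every clause
`C_i = {X_{i,0}, X_{i,1}, X_{i,2}}` consists of three distinct variables and every
variable occurs in exactly three clauses. -/
structure SatInstance (m : ℕ) where
  C : Fin m → Fin 3 → Fin m
  clause_distinct : ∀ i : Fin m, Function.Injective (C i)
  cubic : ∀ v : Fin m,
    (Finset.univ.filter (fun p : Fin m × Fin 3 => C p.1 p.2 = v)).card = 3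

/-- `M` is a one-in-three model of `φ`: every clause contains exactly one variable of `M`. -/
def SatInstance.model {m : ℕ} (φ : SatInstance m) (M : Set (Fin m)) : Prop :=
  ∀ i : Fin m, ∃! r : Fin 3, φ.C i r ∈ M

/-! ## Events of the gadgets -/

inductive Ev where
  | k | z | z0 | z1 | o0 | o1 | o2 | u
  | kj (j : ℕ)  -- the interface events k_j
  | x (i : ℕ)   -- the events x_i
  | p (i : ℕ)   -- the events p_i
  | vj (j : ℕ)  -- the events v_j
  | X (v : ℕ)   -- the variable events X_v
deriving DecidableEq

/-! ## The gadget TSs (states are pairs (tag, position)) -/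

/-- `H_0`, with `h_{0,i} = (0,i)`. -/
def H0 (b : ℕ) : TS (ℕ × ℕ) Ev :=
  (TS.chain (List.replicate b Ev.k ++ List.replicate b Ev.z ++ [Ev.o0] ++
    List.replicate b Ev.k ++ List.replicate b Ev.z ++ List.replicate b Ev.o1 ++
    List.replicate b Ev.k)).mapStates (fun i => (0, i))

/-- `H_1`, with `h_{1,i} = (0,i)`. -/
def H1 (b : ℕ) : TS (ℕ × ℕ) Ev :=
  (TS.chain (List.replicate b Ev.k ++ [Ev.z0, Ev.o0] ++ List.replicate b Ev.k ++
    [Ev.z1, Ev.z0, Ev.o2] ++ List.replicate b Ev.k)).mapStates (fun i => (0, i))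

/-- `H_2`, with `h_{2,i} = (0,i)`. -/
def H2 (b : ℕ) : TS (ℕ × ℕ) Ev :=
  (TS.chain (List.replicate b Ev.k ++ [Ev.o0] ++ List.replicate b Ev.k ++
    [Ev.o2] ++ List.replicate b Ev.k)).mapStates (fun i => (0, i))

/-- `D_{j,0}`, with `d_{j,0,i} = (j+1,i)`. -/
def D0 (b j : ℕ) : TS (ℕ × ℕ) Ev :=
  (TS.chain ([Ev.o0, Ev.kj j] ++ List.replicate (b+1) Ev.o1)).mapStates
    (fun i => (j + 1, i))

/-- `D_{j,1}`, with `d_{j,1,i} = (j+1,i)`. -/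
def D1 (b j : ℕ) : TS (ℕ × ℕ) Ev :=
  (TS.chain [Ev.o0, Ev.kj j, Ev.o2]).mapStates (fun i => (j + 1, i))

/-- The word of the gadget `T_{i,a}` (`a ∈ {0,1,2}`) of the translator `T`. -/
def Tword (b : ℕ) {m : ℕ} (φ : SatInstance m) (i : Fin m) (a : Fin 3) : List Ev :=
  if a = 0 then
    [Ev.kj (6 * (i : ℕ))] ++ List.replicate b (Ev.X ((φ.C i 0 : Fin m) : ℕ)) ++
    [Ev.x (i : ℕ)] ++ List.replicate b (Ev.X ((φ.C i 2 : Fin m) : ℕ)) ++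
    [Ev.kj (6 * (i : ℕ) + 1)]
  else if a = 1 then
    [Ev.kj (6 * (i : ℕ) + 2)] ++ List.replicate b (Ev.X ((φ.C i 1 : Fin m) : ℕ)) ++
    [Ev.p (i : ℕ), Ev.kj (6 * (i : ℕ) + 3)]
  else
    [Ev.kj (6 * (i : ℕ) + 4), Ev.x (i : ℕ), Ev.p (i : ℕ), Ev.kj (6 * (i : ℕ) + 5)]

/-- The gadget `T_{i,a}` of the translator `T`, with states `t_{i,a,pos} = (tag, pos)`. -/
def Tgad (b tag : ℕ) {m : ℕ} (φ : SatInstance m) (i : Fin m) (a : Fin 3) :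
    TS (ℕ × ℕ) Ev :=
  (TS.chain (Tword b φ i a)).mapStates (fun pos => (tag, pos))

/-- The translator `T = U(T_{0,0}, T_{0,1}, T_{0,2}, …, T_{m-1,2})` (standalone,
with `t_{i,a,pos} = (3i+a+1, pos)`). -/
def Ttrans (b : ℕ) {m : ℕ} (φ : SatInstance m) : TS (ℕ × ℕ) Ev :=
  TS.unionFam (fun q : Fin m × Fin 3 => Tgad b (3 * (q.1 : ℕ) + (q.2 : ℕ) + 1) φ q.1 q.2)

/-- `H_3`, with `h_{3,0,i} = (0,i)` and `h_{3,1,i} = (1,i)`: the union of the path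
`h_{3,0,0} --k^b--> h_{3,0,b}` and the path
`h_{3,0,0} --u--> h_{3,1,0} --k^{b-1}--> h_{3,1,b-1} --z--> h_{3,0,b}`. -/
def H3 (b : ℕ) : TS (ℕ × ℕ) Ev :=
  TS.unionFam (fun c : Bool =>
    if c then (TS.chain (List.replicate b Ev.k)).mapStates (fun i => (0, i))
    else (TS.chain ([Ev.u] ++ List.replicate (b-1) Ev.k ++ [Ev.z])).mapStates
      (fun i => if i = 0 then (0, 0) else if i = b + 1 then (0, b) else (1, i - 1)))

/-- The set `E_0 = {(m,m) : 1 ≤ m ≤ b} ∪ {0}`. -/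
def Ezero (b : ℕ) : Set Tev :=
  {e | (∃ q, 1 ≤ q ∧ q ≤ b ∧ e = Tev.pr q q) ∨ e = Tev.gr 0}

/-- The first row `f_{j,0,0} --k^b--> f_{j,0,b}` of `F_j`, with `f_{j,0,i} = (4j+2, i)`. -/
def Fch0 (b j : ℕ) : TS (ℕ × ℕ) Ev :=
  (TS.chain (List.replicate b Ev.k)).mapStates (fun i => (4 * j + 2, i))

/-- The second row `f_{j,0,0} --v_j--> f_{j,1,0} --k^{b-1}--> f_{j,1,b-1} --X_j--> f_{j,0,b}`
of `F_j`, with `f_{j,1,i} = (4j+3, i)`. -/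
def Fch1 (b j : ℕ) : TS (ℕ × ℕ) Ev :=
  (TS.chain ([Ev.vj j] ++ List.replicate (b-1) Ev.k ++ [Ev.X j])).mapStates
    (fun i => if i = 0 then (4 * j + 2, 0) else if i = b + 1 then (4 * j + 2, b)
      else (4 * j + 3, i - 1))

/-- `F_j` as the union of its two rows. -/
def Fgad (b j : ℕ) : TS (ℕ × ℕ) Ev :=
  TS.unionFam (fun c : Bool => if c then Fch0 b j else Fch1 b j)

/-- `G_j`, with `g_{j,i} = (4j+4, i)`. -/
def Ggad (b j : ℕ) : TS (ℕ × ℕ) Ev :=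
  (TS.chain (List.replicate b Ev.k ++ [Ev.X j])).mapStates (fun i => (4 * j + 4, i))

/-- The clause gadget `T_i` (of the translator for the group-extended types),
with `t_{i,pos} = (4i+5, pos)`. -/
def Tgad2 (b : ℕ) {m : ℕ} (φ : SatInstance m) (i : Fin m) : TS (ℕ × ℕ) Ev :=
  (TS.chain (List.replicate b Ev.k ++
    [Ev.X ((φ.C i 0 : Fin m) : ℕ), Ev.X ((φ.C i 1 : Fin m) : ℕ),
     Ev.X ((φ.C i 2 : Fin m) : ℕ), Ev.z] ++ List.replicate b Ev.k)).mapStates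
    (fun pos => (4 * (i : ℕ) + 5, pos))

/-- The translator `T_τ = U(F_0, G_0, …, F_{m-1}, G_{m-1}, T_0, …, T_{m-1})`
for the group-extended types. -/
def Ttrans2fam (b : ℕ) {m : ℕ} (φ : SatInstance m) : Fin m × Fin 3 → TS (ℕ × ℕ) Ev :=
  fun q => if q.2 = 0 then Fgad b (q.1 : ℕ)
    else if q.2 = 1 then Ggad b (q.1 : ℕ) else Tgad2 b φ q.1

def Ttrans2 (b : ℕ) {m : ℕ} (φ : SatInstance m) : TS (ℕ × ℕ) Ev :=
  TS.unionFam (Ttrans2fam b φ)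
/-! ## The key unions and the unions of key and translator -/

/-- The family of constituents of the key `K_{τ^b_0} = U(H_0, D_{0,0},…,D_{6m-1,0})`. -/
def K0fam (b m : ℕ) : Option (Fin (6 * m)) → TS (ℕ × ℕ) Ev
  | none => H0 b
  | some j => D0 b (j : ℕ)

def K0 (b m : ℕ) : TS (ℕ × ℕ) Ev := TS.unionFam (K0fam b m)

/-- The family of constituents of the key `K_{τ^b_1} = U(H_1, D_{0,1},…,D_{6m-1,1})`. -/
def K1fam (b m : ℕ) : Option (Fin (6 * m)) → TS (ℕ × ℕ) Ev
  | none => H1 b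
  | some j => D1 b (j : ℕ)

def K1 (b m : ℕ) : TS (ℕ × ℕ) Ev := TS.unionFam (K1fam b m)

/-- The family of constituents of the key `K = U(H_2, D_{0,1},…,D_{6m-1,1})`. -/
def K2fam (b m : ℕ) : Option (Fin (6 * m)) → TS (ℕ × ℕ) Ev
  | none => H2 b
  | some j => D1 b (j : ℕ)

def K2 (b m : ℕ) : TS (ℕ × ℕ) Ev := TS.unionFam (K2fam b m)

/-- The family of constituents of `U_{τ^b_0} = U(H_0, D_{0,0},…,D_{6m-1,0}, T)`. -/
def U0fam (b : ℕ) {m : ℕ} (φ : SatInstance m) :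
    Option (Fin (6 * m) ⊕ Fin m × Fin 3) → TS (ℕ × ℕ) Ev
  | none => H0 b
  | some (.inl j) => D0 b (j : ℕ)
  | some (.inr q) => Tgad b (6 * m + 1 + 3 * (q.1 : ℕ) + (q.2 : ℕ)) φ q.1 q.2

def U0 (b : ℕ) {m : ℕ} (φ : SatInstance m) : TS (ℕ × ℕ) Ev := TS.unionFam (U0fam b φ)

/-- The family of constituents of `U_{τ^b_1} = U(H_1, D_{0,1},…,D_{6m-1,1}, T)`. -/
def U1fam (b : ℕ) {m : ℕ} (φ : SatInstance m) :
    Option (Fin (6 * m) ⊕ Fin m × Fin 3) → TS (ℕ × ℕ) Ev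
  | none => H1 b
  | some (.inl j) => D1 b (j : ℕ)
  | some (.inr q) => Tgad b (6 * m + 1 + 3 * (q.1 : ℕ) + (q.2 : ℕ)) φ q.1 q.2

def U1 (b : ℕ) {m : ℕ} (φ : SatInstance m) : TS (ℕ × ℕ) Ev := TS.unionFam (U1fam b φ)

/-- The family of constituents of `W = U(H_2, D_{0,1},…,D_{6m-1,1}, T)`. -/
def Wfam (b : ℕ) {m : ℕ} (φ : SatInstance m) :
    Option (Fin (6 * m) ⊕ Fin m × Fin 3) → TS (ℕ × ℕ) Ev
  | none => H2 b
  | some (.inl j) => D1 b (j : ℕ)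
  | some (.inr q) => Tgad b (6 * m + 1 + 3 * (q.1 : ℕ) + (q.2 : ℕ)) φ q.1 q.2

def Wun (b : ℕ) {m : ℕ} (φ : SatInstance m) : TS (ℕ × ℕ) Ev := TS.unionFam (Wfam b φ)

/-- The family of constituents of
`U_τ = U(H_3, F_0, G_0, …, F_{m-1}, G_{m-1}, T_0, …, T_{m-1})` for `τ ∈ {τ^b_2, τ^b_3}`. -/
def U2fam (b : ℕ) {m : ℕ} (φ : SatInstance m) :
    Option (Fin m × Fin 3) → TS (ℕ × ℕ) Ev
  | none => H3 b
  | some q => Ttrans2fam b φ q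

def U2 (b : ℕ) {m : ℕ} (φ : SatInstance m) : TS (ℕ × ℕ) Ev := TS.unionFam (U2fam b φ)

/-! ## The joining `A(U)` -/

/-- The joining `A(U)` of a union `U = U(A_0,…,A_n)` of initialized TSs (`A_i`
initialized at `s0 i`): fresh connector states `q_i = Sum.inr i`, fresh events
`w_{i+1} = Sum.inr (Sum.inl i)` (`i : Fin n`) and `y_i = Sum.inr (Sum.inr i)`,
and transitions `q_i --w_{i+1}--> q_{i+1}` and `q_i --y_i--> s0 i`. -/
def joining {S E : Type} {n : ℕ} (F : Fin (n + 1) → TS S E) (s0 : Fin (n + 1) → S)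
    (h0 : ∀ i, s0 i ∈ (F i).states) :
    TS (S ⊕ Fin (n + 1)) (E ⊕ (Fin n ⊕ Fin (n + 1))) where
  states := {st | (∃ a ∈ (TS.unionFam F).states, st = Sum.inl a) ∨ ∃ q, st = Sum.inr q}
  events := {ev | (∃ e ∈ (TS.unionFam F).events, ev = Sum.inl e) ∨ ∃ c, ev = Sum.inr c}
  tr st ev st' :=
    (∃ a e a', (TS.unionFam F).tr a e a' ∧
        st = Sum.inl a ∧ ev = Sum.inl e ∧ st' = Sum.inl a') ∨
    (∃ i : Fin n, st = Sum.inr i.castSucc ∧ ev = Sum.inr (Sum.inl i) ∧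
        st' = Sum.inr i.succ) ∨
    (∃ i : Fin (n + 1), st = Sum.inr i ∧ ev = Sum.inr (Sum.inr i) ∧
        st' = Sum.inl (s0 i))
  tr_mem := by
    rintro st ev st' (⟨a, e, a', h, rfl, rfl, rfl⟩ | ⟨i, rfl, rfl, rfl⟩ | ⟨i, rfl, rfl, rfl⟩)
    · obtain ⟨h1, h2, h3⟩ := (TS.unionFam F).tr_mem h
      exact ⟨Or.inl ⟨a, h1, rfl⟩, Or.inl ⟨e, h2, rfl⟩, Or.inl ⟨a', h3, rfl⟩⟩
    · exact ⟨Or.inr ⟨_, rfl⟩, Or.inr ⟨_, rfl⟩, Or.inr ⟨_, rfl⟩⟩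
    · exact ⟨Or.inr ⟨_, rfl⟩, Or.inr ⟨_, rfl⟩,
        Or.inl ⟨_, Set.mem_iUnion.2 ⟨i, h0 i⟩, rfl⟩⟩
/-
A `τ^b_0`/`τ^b_1`-region has no group events, so every event moves the support by
its effect `n - m`. The interface events `k_j` have signature `(b - c, c)` with
`c ∈ {0, b}`, which pins the support to `b - c` before and to `c` after each of them.
In each gadget `T_{i,a}` the events between the two pins therefore have total effect
`b - 2c`; a run of `b` copies of a variable event `X_v` forces its effect to lie
between `0` and `±1` (with the sign of `b - 2c`), and combining the three gadgets
gives `b (δ X_{i,0} + δ X_{i,1} + δ X_{i,2}) = b - 2c`. Hence exactly one variable of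
each clause has nonzero effect, and these variables form a one-in-three model.
-/

lemma existsUnique_ne_zero_of_nonneg_of_sum_eq_one {ι : Type*} [Fintype ι] (d : ι → ℤ)
    (hd : ∀ r, 0 ≤ d r) (hsum : ∑ r, d r = 1) : ∃! r, d r ≠ 0 := by
  obtain ⟨r, -, hr⟩ := Finset.exists_ne_zero_of_sum_ne_zero (hsum ▸ one_ne_zero)
  refine ⟨r, hr, fun s hs => ?_⟩
  by_contra hne
  have := Finset.add_le_sum (fun k _ => hd k) (Finset.mem_univ s) (Finset.mem_univ r) hne
  have := hd r
  have := hd s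
  omega

lemma existsUnique_ne_zero_of_pinned {ι : Type*} [Fintype ι] (b c : ℤ) (hb : 0 < b)
    (hc : c = 0 ∨ c = b) (d : ι → ℤ) (hd : ∀ r, 0 ≤ c + b * d r ∧ c + b * d r ≤ b)
    (hsum : b * ∑ r, d r = b - 2 * c) : ∃! r, d r ≠ 0 := by
  rcases hc with rfl | rfl
  · refine existsUnique_ne_zero_of_nonneg_of_sum_eq_one d (fun r => ?_) ?_
    · nlinarith [hd r]
    · exact mul_left_cancel₀ hb.ne' (by linarith)
  · have hneg := existsUnique_ne_zero_of_nonneg_of_sum_eq_one (-d) (fun r => ?_) ?_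
    · simpa using hneg
    · simp only [Pi.neg_apply]
      nlinarith [hd r]
    · refine mul_left_cancel₀ hb.ne' ?_
      simp only [Pi.neg_apply, Finset.sum_neg_distrib]
      linarith

def Tev.effect (e : Tev) : ℤ := e.plus - e.minus

def TS.IsPath {S E : Type} (A : TS S E) (w : List E) (st : ℕ → S) : Prop :=
  ∀ p e, w[p]? = some e → A.tr (st p) e (st (p + 1))

namespace Region

variable {b t : ℕ} {S E : Type} {A : TS S E} (R : Region b t A)

lemma sup_eq_add_effect (ht : t = 0 ∨ t = 1) {s s' : S} {e : E} (h : A.tr s e s') :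
    (R.sup s' : ℤ) = R.sup s + (R.sig e).effect := by
  have hok := R.sig_ok e (A.tr_mem h).2.1
  have hstep := R.resp h
  rcases hsig : R.sig e with ⟨mm, nn⟩ | c
  · rw [hsig] at hstep
    simp only [tevStep] at hstep
    split_ifs at hstep
    simp only [Option.some.injEq] at hstep
    simp only [Tev.effect, Tev.plus, Tev.minus]
    omega
  · rw [hsig] at hok
    exact absurd hok.2 (by omega)

lemma sup_eq_of_sig_eq_pr {c : ℕ} (hc : c = 0 ∨ c = b) {s s' : S} {e : E} (h : A.tr s e s')
    (he : R.sig e = .pr (b - c) c) : R.sup s = b - c ∧ R.sup s' = c := by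
  have hle := R.sup_le s (A.tr_mem h).1
  have hstep := R.resp h
  rw [he] at hstep
  simp only [tevStep] at hstep
  split_ifs at hstep
  simp only [Option.some.injEq] at hstep
  omega

lemma sup_eq_add_sum_effect (ht : t = 0 ∨ t = 1) {u w : List E} {st : ℕ → S}
    (hp : A.IsPath w st) (hu : u <+: w) :
    (R.sup (st u.length) : ℤ) = R.sup (st 0) + (u.map fun e => (R.sig e).effect).sum := by
  induction u generalizing w st with
  | nil => simp
  | cons a u ih =>
    obtain ⟨v, rfl⟩ := hu
    have hfirst := R.sup_eq_add_effect ht (hp 0 a rfl)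
    have hrest := ih (w := u ++ v) (st := fun p => st (p + 1))
      (fun p e h => hp (p + 1) e (by simpa using h)) (List.prefix_append u v)
    simp only [List.length_cons, List.map_cons, List.sum_cons] at hrest ⊢
    linarith

lemma sum_effect_between_pins (ht : t = 0 ∨ t = 1) {c : ℕ} (hc : c = 0 ∨ c = b)
    {κ κ' : E} (hκ : R.sig κ = .pr (b - c) c) (hκ' : R.sig κ' = .pr (b - c) c)
    {u : List E} {st : ℕ → S} (hp : A.IsPath (κ :: (u ++ [κ'])) st) :
    (u.map fun e => (R.sig e).effect).sum = (b : ℤ) - 2 * c ∧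
      ∀ v, v <+: u → 0 ≤ (c : ℤ) + (v.map fun e => (R.sig e).effect).sum ∧
        (c : ℤ) + (v.map fun e => (R.sig e).effect).sum ≤ b := by
  have hp' : A.IsPath (u ++ [κ']) (fun p => st (p + 1)) :=
    fun p e h => hp (p + 1) e (by simpa using h)
  have hstart := (R.sup_eq_of_sig_eq_pr hc (hp 0 κ rfl) hκ).2
  have hsup : ∀ v, v <+: u →
      (R.sup (st (v.length + 1)) : ℤ) = c + (v.map fun e => (R.sig e).effect).sum := by
    intro v hv
    rw [R.sup_eq_add_sum_effect ht hp' (hv.trans (List.prefix_append u [κ'])), hstart]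
  have hend := (R.sup_eq_of_sig_eq_pr hc (hp' u.length κ' (by simp)) hκ').1
  refine ⟨?_, fun v hv => ?_⟩
  · have := hsup u (List.prefix_refl u)
    rw [hend] at this
    omega
  · have hlt : v.length < (u ++ [κ']).length := by
      simp only [List.length_append, List.length_singleton]
      exact Nat.lt_succ_of_le hv.length_le
    have hle := R.sup_le _ (A.tr_mem (hp' _ _ (List.getElem?_eq_getElem hlt))).1
    beta_reduce at hle
    rw [← hsup v hv]
    omega

end Region

section Translator

variable {b t m : ℕ} {φ : SatInstance m}

lemma Ttrans.isPath_Tword (i : Fin m) (a : Fin 3) :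
    (Ttrans b φ).IsPath (Tword b φ i a) (fun p => (3 * (i : ℕ) + (a : ℕ) + 1, p)) :=
  fun p _ h => ⟨(i, a), p, p + 1, ⟨h, rfl⟩, rfl, rfl⟩

lemma Tword_zero (i : Fin m) : Tword b φ i 0 = Ev.kj (6 * i) ::
    ((List.replicate b (Ev.X (φ.C i 0)) ++ Ev.x i :: List.replicate b (Ev.X (φ.C i 2))) ++
      [Ev.kj (6 * i + 1)]) := by
  simp [Tword]

lemma Tword_one (i : Fin m) : Tword b φ i 1 = Ev.kj (6 * i + 2) ::
    ((List.replicate b (Ev.X (φ.C i 1)) ++ [Ev.p i]) ++ [Ev.kj (6 * i + 3)]) := by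
  simp [Tword]

lemma Tword_two (i : Fin m) : Tword b φ i 2 = Ev.kj (6 * i + 4) ::
    ([Ev.x i, Ev.p i] ++ [Ev.kj (6 * i + 5)]) := by
  simp [Tword]

theorem Ttrans.existsUnique_effect_ne_zero (R : Region b t (Ttrans b φ))
    (ht : t = 0 ∨ t = 1) (hb : 1 ≤ b) {c : ℕ} (hc : c = 0 ∨ c = b)
    (hk : ∀ j < 6 * m, R.sig (Ev.kj j) = .pr (b - c) c) (i : Fin m) :
    ∃! r : Fin 3, (R.sig (Ev.X (φ.C i r))).effect ≠ 0 := by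
  have hkey : ∀ j < 6, R.sig (Ev.kj (6 * i + j)) = .pr (b - c) c :=
    fun j hj => hk _ (by omega)
  have hp0 := Ttrans.isPath_Tword (b := b) (φ := φ) i 0
  have hp1 := Ttrans.isPath_Tword (b := b) (φ := φ) i 1
  have hp2 := Ttrans.isPath_Tword (b := b) (φ := φ) i 2
  rw [Tword_zero] at hp0
  rw [Tword_one] at hp1
  rw [Tword_two] at hp2
  obtain ⟨hsum0, hpre0⟩ :=
    R.sum_effect_between_pins ht hc (hkey 0 (by omega)) (hkey 1 (by omega)) hp0
  obtain ⟨hsum1, hpre1⟩ :=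
    R.sum_effect_between_pins ht hc (hkey 2 (by omega)) (hkey 3 (by omega)) hp1
  obtain ⟨hsum2, -⟩ :=
    R.sum_effect_between_pins ht hc (hkey 4 (by omega)) (hkey 5 (by omega)) hp2
  have hX0 := hpre0 _ (List.prefix_append _ _)
  have hX0x := hpre0 (List.replicate b (Ev.X (φ.C i 0)) ++ [Ev.x i]) (by simp)
  have hX1 := hpre1 _ (List.prefix_append _ _)
  simp only [List.map_append, List.map_cons, List.map_nil, List.map_replicate, List.sum_append,
    List.sum_cons, List.sum_nil, List.sum_replicate, nsmul_eq_mul]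
    at hsum0 hsum1 hsum2 hX0 hX0x hX1
  refine existsUnique_ne_zero_of_pinned (b : ℤ) c (by omega) (by omega) _ (fun r => ?_) ?_
  · fin_cases r <;> simp only [Fin.zero_eta, Fin.mk_one, Fin.reduceFinMk] <;>
      constructor <;> linarith
  · rw [Fin.sum_univ_three]
    linarith

end Translator

theorem stmt7_general (b t : ℕ) (hb : 1 ≤ b) (ht : t = 0 ∨ t = 1)
    {m : ℕ} (φ : SatInstance m)
    (R : Region b t (Ttrans b φ))
    (hk : (∀ j < 6 * m, R.sig (Ev.kj j) = Tev.pr 0 b) ∨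
          (∀ j < 6 * m, R.sig (Ev.kj j) = Tev.pr b 0)) :
    ∃ M : Set (Fin m), φ.model M := by
  obtain ⟨c, hc, hkc⟩ :
      ∃ c, (c = 0 ∨ c = b) ∧ ∀ j < 6 * m, R.sig (Ev.kj j) = .pr (b - c) c := by
    rcases hk with hk | hk
    · exact ⟨b, Or.inr rfl, by simpa using hk⟩
    · exact ⟨0, Or.inl rfl, by simpa using hk⟩
  exact ⟨{v | (R.sig (Ev.X v)).effect ≠ 0}, Ttrans.existsUnique_effect_ne_zero R ht hb hc hkc⟩

/-- Completeness of the translator `T`: for `τ ∈ {τ^b_0, τ^b_1}`,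
if a `τ`-region of `T` satisfies `sig(k_0) = … = sig(k_{6m-1}) = (0,b)` or
`sig(k_0) = … = sig(k_{6m-1}) = (b,0)`, then `φ` has a one-in-three model. -/
theorem stmt7 (b t : ℕ) (hb : 1 ≤ b) (ht : t = 0 ∨ t = 1)
    {m : ℕ} (hm : 1 ≤ m) (φ : SatInstance m)
    (R : Region b t (Ttrans b φ))
    (hk : (∀ j < 6 * m, R.sig (Ev.kj j) = Tev.pr 0 b) ∨
          (∀ j < 6 * m, R.sig (Ev.kj j) = Tev.pr b 0)) :
    ∃ M : Set (Fin m), φ.model M :=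
  stmt7_general b t hb ht φ R hk
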